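/- Let E and F be real normed vector spaces, e : E ≃ₜ F a homeomorphism, p ∈ E, and s ⊆ E a set. Suppose e has Fréchet derivative D at p and the inverse e.symm has Fréchet derivative D' at e p. Then tangentConeAt ℝ (e '' s) (e p) = D '' tangentConeAt ℝ s p. -/
import Mathlib

/-- Invariance of tangent cones under a homeomorphism differentiable at `p`
with differentiable inverse at `e p`. -/
theorem tangentConeAt_image_homeomorph {E F : Type*} [NormedAddCommGroup E] [NormedSpace ℝ E]
    [NormedAddCommGroup F] [NormedSpace ℝ F] (e : E ≃ₜ F) (p : E) (s : Set E)
    (D : E →L[ℝ] F) (D' : F →L[ℝ] E)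
    (he : HasFDerivAt (⇑e) D p) (he' : HasFDerivAt (⇑e.symm) D' (e p)) :
    tangentConeAt ℝ (⇑e '' s) (e p) = ⇑D '' tangentConeAt ℝ s p := by
  have hDD' : D.comp D' = ContinuousLinearMap.id ℝ F := by
    have h1 : HasFDerivAt (⇑e ∘ ⇑e.symm) (D.comp D') (e p) := by
      have := he' 
      exact (e.symm_apply_apply p ▸ he).comp (e p) he'
    have h2 : HasFDerivAt (⇑e ∘ ⇑e.symm) (ContinuousLinearMap.id ℝ F) (e p) := by
      have : HasFDerivAt (id : F → F) (ContinuousLinearMap.id ℝ F) (e p) := hasFDerivAt_id _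
      exact this.congr_of_eventuallyEq (by filter_upwards with x using by simp)
    exact h1.unique h2
  apply Set.Subset.antisymm
  · intro w hw
    have h := he'.hasFDerivWithinAt.mapsTo_tangent_cone (s := ⇑e '' s) hw
    rw [show ⇑e.symm '' (⇑e '' s) = s by simp [Set.image_image], e.symm_apply_apply] at h
    refine ⟨D' w, h, ?_⟩
    have := congrArg (fun L => L w) hDD'
    simpa using this
  · rintro _ ⟨v, hv, rfl⟩
    exact he.hasFDerivWithinAt.mapsTo_tangent_cone hv
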